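/- For every integer m ≥ 2, the worst-case state complexity of L1^R · L2, where L1 ranges over languages of state complexity m and L2 over languages of state complexity 1, equals 2^(m-1) + 1. -/

import Mathlib

/-!
By Myhill–Nerode, the state complexity of a regular language is the number of its left
quotients. A language of state complexity 1 is `∅` or `Σ*`, and `L^R · ∅ = ∅`, so only
`L₂ = Σ*` matters. The quotient of `L^R · Σ*` by `u` is `Σ*` if a prefix of `u` lies in `L^R`;
otherwise it is `L_S^R · Σ*`, where `L_S` is accepted by the minimal DFA of `L` with the
accepting set replaced by `S = {q | u^R is accepted from q}`, and `S` avoids the initial state.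
This leaves at most `2^(m-1) + 1` quotients. The bound is attained over the alphabet of all
self-maps of the states `{0, …, m-1}`, with `δ(q, a) = a q`, initial state `0` and final
state `1`: the one-letter words `a_S`, sending `0` to `0` and a state `i ≠ 0` to `1` exactly
when `i ∈ S`, together with a letter sending `0` to `1`, have pairwise distinct quotients.
-/

open Computability

/-- The reversal of a language. -/
def revLang {α : Type} (L : Language α) : Language α := {w | w.reverse ∈ L}

/-- The state complexity of a language: the least number of states of a complete DFA
    accepting it. -/
noncomputable def stateComplexity {α : Type} (L : Language α) : ℕ :=
  sInf {k | ∃ (σ : Type) (inst : Fintype σ) (M : DFA α σ),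
    @Fintype.card σ inst = k ∧ M.accepts = L}

open Function

variable {α : Type} {L : Language α}

theorem isRegular_of_stateComplexity_ne_zero (h : stateComplexity L ≠ 0) : L.IsRegular := by
  obtain ⟨_, σ, _, M, -, hM⟩ := Nat.nonempty_of_pos_sInf (Nat.pos_of_ne_zero h)
  exact ⟨σ, inferInstance, M, hM⟩

theorem stateComplexity_accepts_le_card {σ : Type} [Fintype σ] (M : DFA α σ) :
    stateComplexity M.accepts ≤ Fintype.card σ :=
  Nat.sInf_le ⟨σ, inferInstance, M, rfl, rfl⟩

theorem card_range_leftQuotient_accepts_le {σ : Type} [Fintype σ] (M : DFA α σ) :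
    Nat.card (Set.range M.accepts.leftQuotient) ≤ Fintype.card σ := by
  rw [Language.leftQuotient_accepts, ← Nat.card_eq_fintype_card]
  exact (Nat.card_mono (Set.finite_range _) (Set.range_comp_subset_range _ _)).trans
    (Finite.card_range_le _)

theorem Language.IsRegular.stateComplexity_eq (hL : L.IsRegular) :
    stateComplexity L = Nat.card (Set.range L.leftQuotient) := by
  have := hL.finite_range_leftQuotient.fintype
  refine le_antisymm ?_ ?_
  · simpa [Nat.card_eq_fintype_card] using stateComplexity_accepts_le_card L.toDFA
  · obtain ⟨σ, _, M, hM⟩ := hL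
    exact le_csInf ⟨_, σ, inferInstance, M, rfl, hM⟩ fun k ⟨σ, _, M, hk, hM⟩ =>
      hk ▸ hM ▸ card_range_leftQuotient_accepts_le M

theorem Language.IsRegular.card_le_stateComplexity {ι : Type} (hL : L.IsRegular)
    (w : ι → List α) (hw : Injective (L.leftQuotient ∘ w)) :
    Nat.card ι ≤ stateComplexity L := by
  have := hL.finite_range_leftQuotient.to_subtype
  rw [hL.stateComplexity_eq]
  exact Nat.card_le_card_of_injective (fun i => ⟨_, w i, rfl⟩) fun i j h =>
    hw (congrArg Subtype.val h)

theorem forall_leftQuotient_eq_self_iff : (∀ u, L.leftQuotient u = L) ↔ L = ⊤ ∨ L = 0 := by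
  constructor
  · intro h
    have hmem (w : List α) : w ∈ L ↔ [] ∈ L := by
      rw [← List.append_nil w, ← Language.mem_leftQuotient, h w]
    by_cases hnil : [] ∈ L
    · exact .inl (Set.eq_univ_of_forall fun w => (hmem w).mpr hnil)
    · exact .inr (Set.eq_empty_of_forall_notMem fun w hw => hnil ((hmem w).mp hw))
  · rintro (rfl | rfl) u <;> rfl

theorem stateComplexity_eq_one_iff : stateComplexity L = 1 ↔ L = ⊤ ∨ L = 0 := by
  rw [← forall_leftQuotient_eq_self_iff]
  constructor
  · intro h u
    have hL := isRegular_of_stateComplexity_ne_zero (h.trans_ne one_ne_zero)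
    rw [hL.stateComplexity_eq, Nat.card_eq_one_iff_unique] at h
    exact congrArg Subtype.val (h.1.elim ⟨_, u, rfl⟩ ⟨_, [], rfl⟩)
  · intro h
    have hrange : Set.range L.leftQuotient = {L} :=
      Set.eq_singleton_iff_unique_mem.mpr ⟨⟨[], rfl⟩, by rintro _ ⟨u, rfl⟩; exact h u⟩
    have hL : L.IsRegular :=
      .of_finite_range_leftQuotient (hrange ▸ Set.finite_singleton L)
    rw [hL.stateComplexity_eq, hrange, Nat.card_unique]

@[simp]
theorem mem_revLang {w : List α} : w ∈ revLang L ↔ w.reverse ∈ L :=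
  Iff.rfl

theorem mem_mul_top_iff {w : List α} : w ∈ L * ⊤ ↔ ∃ p ∈ L, p <+: w := by
  simp only [Language.mem_mul, List.IsPrefix]
  exact exists_congr fun p => and_congr_right fun _ =>
    ⟨fun ⟨s, _, h⟩ => ⟨s, h⟩, fun ⟨s, h⟩ => ⟨s, trivial, h⟩⟩

theorem leftQuotient_mul_top_of_mem {u : List α} (hu : u ∈ L * ⊤) :
    (L * ⊤).leftQuotient u = ⊤ := by
  obtain ⟨p, hp, s, -, rfl⟩ := Language.mem_mul.mp hu
  exact Set.eq_univ_of_forall fun v =>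
    Language.mem_mul.mpr ⟨p, hp, s ++ v, trivial, (List.append_assoc _ _ _).symm⟩

theorem leftQuotient_mul_top_of_notMem {u : List α} (hu : u ∉ L * ⊤) :
    (L * ⊤).leftQuotient u = L.leftQuotient u * ⊤ := by
  ext v
  simp only [Language.mem_leftQuotient, Language.mem_mul]
  constructor
  · rintro ⟨p, hp, s, -, h⟩
    rcases List.append_eq_append_iff.mp h with ⟨a, rfl, -⟩ | ⟨c, rfl, rfl⟩
    · exact (hu (Language.mem_mul.mpr ⟨p, hp, a, trivial, rfl⟩)).elim
    · exact ⟨c, hp, s, trivial, rfl⟩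
  · rintro ⟨c, hc, s, -, rfl⟩
    exact ⟨u ++ c, hc, s, trivial, List.append_assoc _ _ _⟩

namespace DFA

variable {Q : Type}

def withAccept (M : DFA α Q) (S : Set Q) : DFA α Q := ⟨M.step, M.start, S⟩

theorem leftQuotient_revLang_accepts (M : DFA α Q) (u : List α) :
    (revLang M.accepts).leftQuotient u =
      revLang (M.withAccept {q | u.reverse ∈ M.acceptsFrom q}).accepts := by
  ext x
  rw [Language.mem_leftQuotient, mem_revLang, mem_revLang, List.reverse_append, mem_accepts, eval,
    evalFrom_of_append]
  rfl

variable (M : DFA α Q)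

def revLangMulTopQuotient : Option (Set {q // q ≠ M.start}) → Language α
  | none => ⊤
  | some T => revLang (M.withAccept (Subtype.val '' T)).accepts * ⊤

theorem range_leftQuotient_revLang_accepts_mul_top_subset :
    Set.range (revLang M.accepts * ⊤).leftQuotient ⊆ Set.range M.revLangMulTopQuotient := by
  rintro _ ⟨u, rfl⟩
  by_cases hu : u ∈ revLang M.accepts * ⊤
  · exact ⟨none, (leftQuotient_mul_top_of_mem hu).symm⟩
  · have hstart : u.reverse ∉ M.acceptsFrom M.start := fun h =>
      hu (Language.mem_mul.mpr ⟨u, h, [], trivial, List.append_nil u⟩)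
    refine ⟨some {q | u.reverse ∈ M.acceptsFrom q}, ?_⟩
    rw [leftQuotient_mul_top_of_notMem hu, leftQuotient_revLang_accepts, revLangMulTopQuotient]
    congr
    ext q
    simp only [Set.mem_image, Set.mem_ofPred_eq, Subtype.exists, exists_and_right, exists_eq_right]
    exact ⟨fun ⟨_, h⟩ => h, fun h => ⟨fun hq => hstart (hq ▸ h), h⟩⟩

theorem isRegular_revLang_accepts_mul_top [Finite Q] : (revLang M.accepts * ⊤).IsRegular :=
  .of_finite_range_leftQuotient
    ((Set.finite_range _).subset M.range_leftQuotient_revLang_accepts_mul_top_subset)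

theorem stateComplexity_revLang_accepts_mul_top_le [Fintype Q] :
    stateComplexity (revLang M.accepts * ⊤) ≤ 2 ^ (Fintype.card Q - 1) + 1 := by
  classical
  calc stateComplexity (revLang M.accepts * ⊤)
      = Nat.card (Set.range (revLang M.accepts * ⊤).leftQuotient) :=
        M.isRegular_revLang_accepts_mul_top.stateComplexity_eq
    _ ≤ Nat.card (Set.range M.revLangMulTopQuotient) :=
        Nat.card_mono (Set.finite_range _) M.range_leftQuotient_revLang_accepts_mul_top_subset
    _ ≤ Nat.card (Option (Set {q // q ≠ M.start})) := Finite.card_range_le _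
    _ = 2 ^ (Fintype.card Q - 1) + 1 := by
      rw [Nat.card_eq_fintype_card, Fintype.card_option, Fintype.card_set,
        Fintype.card_subtype_compl, Fintype.card_subtype_eq]

end DFA

theorem Language.IsRegular.stateComplexity_revLang_mul_top_le (hL : L.IsRegular) :
    stateComplexity (revLang L * ⊤) ≤ 2 ^ (stateComplexity L - 1) + 1 := by
  have := hL.finite_range_leftQuotient.fintype
  simpa [hL.stateComplexity_eq, Nat.card_eq_fintype_card] using
    L.toDFA.stateComplexity_revLang_accepts_mul_top_le

def transformationDFA (k : ℕ) : DFA (Fin (k + 2) → Fin (k + 2)) (Fin (k + 2)) where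
  step q a := a q
  start := 0
  accept := {1}

namespace transformationDFA

variable (k : ℕ)

theorem mem_accepts_iff (w : List (Fin (k + 2) → Fin (k + 2))) :
    w ∈ (transformationDFA k).accepts ↔ w.foldl (fun q a => a q) 0 = 1 :=
  Iff.rfl

theorem singleton_mem_revLang_accepts_mul_top (x : Fin (k + 2) → Fin (k + 2)) :
    [x] ∈ revLang (transformationDFA k).accepts * ⊤ ↔ x 0 = 1 := by
  simp [mem_mul_top_iff, List.prefix_cons_iff, mem_accepts_iff, and_or_left, exists_or]

theorem pair_mem_revLang_accepts_mul_top (x y : Fin (k + 2) → Fin (k + 2)) :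
    [x, y] ∈ revLang (transformationDFA k).accepts * ⊤ ↔ x 0 = 1 ∨ x (y 0) = 1 := by
  simp [mem_mul_top_iff, List.prefix_cons_iff, mem_accepts_iff, and_or_left, exists_or]

theorem stateComplexity_accepts : stateComplexity (transformationDFA k).accepts = k + 2 := by
  refine le_antisymm (by simpa using stateComplexity_accepts_le_card (transformationDFA k)) ?_
  have hL : (transformationDFA k).accepts.IsRegular := ⟨_, inferInstance, _, rfl⟩
  have hinj : Injective ((transformationDFA k).accepts.leftQuotient ∘ fun q => [fun _ => q]) := by
    intro q r h
    have := congrArg (([fun s => if s = q then 1 else 0] : List _) ∈ ·) h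
    simpa [mem_accepts_iff, eq_comm] using this
  simpa using hL.card_le_stateComplexity _ hinj

def indicatorLetter (S : Finset (Fin (k + 1))) : Fin (k + 2) → Fin (k + 2) :=
  Fin.cases 0 fun i => if i ∈ S then 1 else 0

def foolingWord : Option (Finset (Fin (k + 1))) → List (Fin (k + 2) → Fin (k + 2))
  | none => [fun _ => 1]
  | some S => [indicatorLetter k S]

theorem injective_leftQuotient_foolingWord :
    Injective ((revLang (transformationDFA k).accepts * ⊤).leftQuotient ∘ foolingWord k) := by
  set K := revLang (transformationDFA k).accepts * ⊤
  have hnil (S) : [] ∉ K.leftQuotient [indicatorLetter k S] := by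
    simp [K, singleton_mem_revLang_accepts_mul_top, indicatorLetter]
  have hsucc (S i) : [fun _ => i.succ] ∈ K.leftQuotient [indicatorLetter k S] ↔ i ∈ S := by
    simp [K, pair_mem_revLang_accepts_mul_top, indicatorLetter]
  have htop : [] ∈ K.leftQuotient [fun _ => 1] := by
    simp [K, singleton_mem_revLang_accepts_mul_top]
  rintro (_ | S) (_ | T) h <;> simp only [comp_apply, foolingWord] at h
  · rfl
  · exact (hnil T (h ▸ htop)).elim
  · exact (hnil S (h ▸ htop)).elim
  · exact congrArg some (Finset.ext fun i => by rw [← hsucc, h, hsucc])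

theorem stateComplexity_revLang_accepts_mul_top :
    stateComplexity (revLang (transformationDFA k).accepts * ⊤) = 2 ^ (k + 1) + 1 := by
  refine le_antisymm
    (by simpa using (transformationDFA k).stateComplexity_revLang_accepts_mul_top_le) ?_
  simpa [Nat.card_eq_fintype_card, Fintype.card_finset] using
    (transformationDFA k).isRegular_revLang_accepts_mul_top.card_le_stateComplexity _
      (injective_leftQuotient_foolingWord k)

end transformationDFA

/-- The worst-case state complexity of L₁^R · L₂ over languages L₁ of state complexity m ≥ 2
    and L₂ of state complexity 1 equals 2^(m-1) + 1. -/
theorem revcat_state_complexity_n_eq_one (m : ℕ) (hm : 2 ≤ m) :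
    IsGreatest {k | ∃ (α : Type) (_ : Fintype α) (L₁ L₂ : Language α),
        stateComplexity L₁ = m ∧ stateComplexity L₂ = 1 ∧
        stateComplexity (revLang L₁ * L₂) = k}
      (2 ^ (m - 1) + 1) := by
  obtain ⟨k, rfl⟩ : ∃ k, m = k + 2 := ⟨m - 2, by omega⟩
  refine ⟨⟨_, inferInstance, (transformationDFA k).accepts, ⊤,
    transformationDFA.stateComplexity_accepts k, stateComplexity_eq_one_iff.mpr (.inl rfl),
    transformationDFA.stateComplexity_revLang_accepts_mul_top k⟩, ?_⟩
  rintro _ ⟨α, _, L₁, L₂, h₁, h₂, rfl⟩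
  rcases stateComplexity_eq_one_iff.mp h₂ with rfl | rfl
  · have hL₁ := isRegular_of_stateComplexity_ne_zero (h₁.trans_ne (by omega))
    simpa [h₁] using hL₁.stateComplexity_revLang_mul_top_le
  · rw [mul_zero, stateComplexity_eq_one_iff.mpr (.inr rfl)]
    exact Nat.le_add_left 1 _
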